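/- Let d ≥ 1 and let f be a nonzero harmonic binary d-form. Then the Waring rank of f equals d: there exist real numbers λ₁,…,λ_d and pairwise non-proportional real linear forms L₁,…,L_d with f = Σ_{i=1}^d λᵢ Lᵢ^d, and no such decomposition exists with fewer than d summands. -/

import Mathlib

open MvPolynomial Finset

/-- The Laplacian `∂x² + ∂y²` applied to a binary polynomial. -/
noncomputable def lap (f : MvPolynomial (Fin 2) ℝ) : MvPolynomial (Fin 2) ℝ :=
  pderiv 0 (pderiv 0 f) + pderiv 1 (pderiv 1 f)

/-- Apply the constant-coefficient differential operator encoded by the polynomial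
`g ∈ ℝ[∂x,∂y]` (with `∂x = X 0`, `∂y = X 1`) to the polynomial `f`. -/
noncomputable def diffOp (g f : MvPolynomial (Fin 2) ℝ) : MvPolynomial (Fin 2) ℝ :=
  (AddMonoidAlgebra.coeff g).sum fun m c =>
    c • ((fun p => pderiv (0 : Fin 2) p)^[m 0] ((fun p => pderiv (1 : Fin 2) p)^[m 1] f))

/-- The harmonic form `h_{d,0} = Σ_j (−1)^j C(d,2j) x^(d−2j) y^(2j)`. -/
noncomputable def h0 (d : ℕ) : MvPolynomial (Fin 2) ℝ :=
  ∑ j ∈ Finset.range (d / 2 + 1),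
    C ((-1 : ℝ) ^ j * (d.choose (2 * j) : ℝ)) * X 0 ^ (d - 2 * j) * X 1 ^ (2 * j)

/-- The harmonic form `h_{d,1} = Σ_j (−1)^j C(d,2j+1) x^(d−2j−1) y^(2j+1)`. -/
noncomputable def h1 (d : ℕ) : MvPolynomial (Fin 2) ℝ :=
  ∑ j ∈ Finset.range ((d - 1) / 2 + 1),
    C ((-1 : ℝ) ^ j * (d.choose (2 * j + 1) : ℝ)) * X 0 ^ (d - (2 * j + 1)) * X 1 ^ (2 * j + 1)

/-- `f` is a sum of `r` real multiples of `d`-th powers of real linear forms. -/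
def IsWaringDecomp (d r : ℕ) (f : MvPolynomial (Fin 2) ℝ) : Prop :=
  ∃ (lam a b : Fin r → ℝ), f = ∑ i, lam i • (C (a i) * X 0 + C (b i) * X 1) ^ d

/-- The (real) Waring rank of `f` as a binary `d`-form: the smallest positive `r`
admitting a Waring decomposition of length `r`. -/
noncomputable def waringRank (d : ℕ) (f : MvPolynomial (Fin 2) ℝ) : ℕ :=
  sInf {r : ℕ | 0 < r ∧ IsWaringDecomp d r f}

/-!
Over `ℂ` put `z = x + i y` and `w = x - i y`. Since `Δ f = 0` gives a two-step recursion on the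
coefficients of `f`, a real harmonic `d`-form is determined by its coefficients of `x ^ d` and
`x ^ (d - 1) * y`, hence equals `A z ^ d + conj A w ^ d` for some `A ≠ 0`.

Lower bound: the derivation `b ∂x - a ∂y` kills `(a x + b y) ^ d` and sends `z ^ d`, `w ^ d` to
nonzero multiples of `z ^ (d - 1)`, `w ^ (d - 1)`; applying one such derivation per summand of a
decomposition with `r < d` terms kills it, but not `A z ^ d + conj A w ^ d`.

Upper bound: if `u ^ d = A` and `ζ` is a primitive `d`-th root of unity, then
`∑ k < d, (u z + ζ ^ k conj u w) ^ d = d (A z ^ d + conj A w ^ d)`. Writing `ζ = ω ^ 2` with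
`ω = exp (π i / d)`, the `k`-th summand is `(-1) ^ k` times the `d`-th power of the real linear
form `v z + conj v w`, `v = u conj ω ^ k`, and these forms are pairwise non-proportional because
`Im (ω ^ m) > 0` for `0 < m < d`.
-/

theorem IsPrimitiveRoot.sum_add_pow_mul_pow {R : Type*} [CommRing R] [NoZeroDivisors R]
    {ζ : R} {n : ℕ} (hζ : IsPrimitiveRoot ζ n) (x y : R) :
    ∑ k ∈ range n, (x + ζ ^ k * y) ^ n = n * (x ^ n + y ^ n) := by
  have hgeom (j : ℕ) (hj0 : j ≠ 0) (hjn : j < n) : ∑ k ∈ range n, (ζ ^ j) ^ k = 0 := by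
    have h := geom_sum_mul (ζ ^ j) n
    rw [pow_right_comm, hζ.pow_eq_one, one_pow, sub_self] at h
    exact (mul_eq_zero.mp h).resolve_right (sub_ne_zero.mpr (hζ.pow_ne_one_of_pos_of_lt hj0 hjn))
  rcases n.eq_zero_or_pos with rfl | hn
  · simp
  simp_rw [add_pow, mul_pow, ← pow_mul, mul_comm _ (n - _), pow_mul]
  rw [sum_comm]
  have hterm (m : ℕ) : ∑ k ∈ range n, x ^ m * ((ζ ^ (n - m)) ^ k * y ^ (n - m)) * n.choose m
      = x ^ m * y ^ (n - m) * n.choose m * ∑ k ∈ range n, (ζ ^ (n - m)) ^ k := by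
    rw [mul_sum]; exact sum_congr rfl fun _ _ => by ring
  simp_rw [hterm]
  rw [sum_eq_add 0 n hn.ne]
  · simp only [Nat.sub_zero, Nat.sub_self, hζ.pow_eq_one, pow_zero, one_pow, sum_const,
      card_range, nsmul_eq_mul, Nat.choose_zero_right, Nat.choose_self, Nat.cast_one]
    ring
  · intro m hm hm'
    rw [hgeom (n - m) (by grind) (by grind), mul_zero]
  · simp
  · simp

section BinaryForm

variable {R : Type*} [CommRing R]

noncomputable def linForm (p q : R) : MvPolynomial (Fin 2) R := C p * X 0 + C q * X 1

noncomputable def expXY (i j : ℕ) : Fin 2 →₀ ℕ := Finsupp.single 0 i + Finsupp.single 1 j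

@[simp] lemma expXY_apply_zero (i j : ℕ) : expXY i j 0 = i := by simp [expXY]

@[simp] lemma expXY_apply_one (i j : ℕ) : expXY i j 1 = j := by simp [expXY]

lemma eq_expXY (m : Fin 2 →₀ ℕ) : m = expXY (m 0) (m 1) := by
  ext k; fin_cases k <;> simp

lemma linForm_pow (p q : R) (n : ℕ) :
    linForm p q ^ n = ∑ i ∈ range (n + 1),
      monomial (expXY i (n - i)) (p ^ i * q ^ (n - i) * n.choose i) := by
  rw [linForm, add_pow]
  refine sum_congr rfl fun i _ => ?_
  rw [mul_pow, mul_pow, ← C_pow, ← C_pow, C_mul_X_pow_eq_monomial, C_mul_X_pow_eq_monomial,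
    ← map_natCast (C : R →+* MvPolynomial (Fin 2) R), ← monomial_zero', monomial_mul,
    monomial_mul, expXY, add_zero]

lemma coeff_linForm_pow (p q : R) (i j : ℕ) :
    coeff (expXY i j) (linForm p q ^ (i + j)) = p ^ i * q ^ j * (i + j).choose i := by
  rw [linForm_pow, coeff_sum, sum_eq_single i]
  · simp
  · intro k _ hk
    rw [coeff_monomial, if_neg fun h => hk (by simpa using DFunLike.congr_fun h 0)]
  · simp

lemma isHomogeneous_linForm_pow (p q : R) (n : ℕ) :
    (linForm p q ^ n).IsHomogeneous n := by
  simpa [linForm] using ((isHomogeneous_C_mul_X p 0).add (isHomogeneous_C_mul_X q 1)).pow n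

variable (R) in
noncomputable def laplacian :
    MvPolynomial (Fin 2) R →ₗ[R] MvPolynomial (Fin 2) R :=
  (pderiv 0).toLinearMap ∘ₗ (pderiv 0).toLinearMap +
    (pderiv 1).toLinearMap ∘ₗ (pderiv 1).toLinearMap

lemma laplacian_apply (f : MvPolynomial (Fin 2) R) :
    laplacian R f = pderiv 0 (pderiv 0 f) + pderiv 1 (pderiv 1 f) := rfl

lemma coeff_laplacian (f : MvPolynomial (Fin 2) R) (i j : ℕ) :
    coeff (expXY i j) (laplacian R f) =
      coeff (expXY (i + 2) j) f * ((i + 1) * (i + 2)) +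
        coeff (expXY i (j + 2)) f * ((j + 1) * (j + 2)) := by
  have h0 : expXY i j + Finsupp.single 0 1 + Finsupp.single 0 1 = expXY (i + 2) j := by
    ext k; fin_cases k <;> simp [expXY]
  have h1 : expXY i j + Finsupp.single 1 1 + Finsupp.single 1 1 = expXY i (j + 2) := by
    ext k; fin_cases k <;> simp [expXY]
  simp only [laplacian_apply, coeff_add, coeff_pderiv, h0, h1, Finsupp.add_apply,
    expXY_apply_zero, expXY_apply_one, Finsupp.single_eq_same]
  push_cast
  ring

lemma laplacian_linForm_pow {p q : R} (hpq : p ^ 2 + q ^ 2 = 0) (n : ℕ) :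
    laplacian R (linForm p q ^ n) = 0 := by
  have h0 : pderiv 0 (linForm p q) = C p := by simp [linForm]
  have h1 : pderiv 1 (linForm p q) = C q := by simp [linForm]
  simp only [laplacian_apply, pderiv_pow, h0, h1, Derivation.leibniz, pderiv_C, smul_eq_mul,
    mul_zero, add_zero, ← map_natCast (C : R →+* MvPolynomial (Fin 2) R)]
  have hC : (C p) ^ 2 + (C q) ^ 2 = (0 : MvPolynomial (Fin 2) R) := by
    rw [← map_pow, ← map_pow, ← map_add, hpq, map_zero]
  linear_combination (C (n : R) * C ((n - 1 : ℕ) : R) * linForm p q ^ (n - 1 - 1)) * hC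

lemma eq_zero_of_laplacian_eq_zero [NoZeroDivisors R] [CharZero R] {n : ℕ}
    {F : MvPolynomial (Fin 2) R} (hF : F.IsHomogeneous (n + 1)) (hΔ : laplacian R F = 0)
    (h0 : coeff (expXY (n + 1) 0) F = 0) (h1 : coeff (expXY n 1) F = 0) : F = 0 := by
  have key : ∀ j i, i + j = n + 1 → coeff (expXY i j) F = 0 := by
    intro j
    induction j using Nat.twoStepInduction with
    | zero => rintro i rfl; exact h0
    | one =>
      intro i hi
      obtain rfl : i = n := by omega
      exact h1
    | more j ih _ =>
      intro i hi
      have h := coeff_laplacian F i j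
      rw [hΔ, coeff_zero, ih (i + 2) (by omega), zero_mul, zero_add] at h
      have hj : ((j : R) + 1) * (j + 2) ≠ 0 := by norm_cast
      exact (mul_eq_zero.mp h.symm).resolve_right hj
  ext m
  rw [coeff_zero]
  by_cases hm : m 0 + m 1 = n + 1
  · rw [eq_expXY m]; exact key _ _ hm
  · exact hF.coeff_eq_zero (by rwa [Finsupp.degree_eq_sum, Fin.sum_univ_two])

noncomputable def perpDerivation (a b : R) :
    Derivation R (MvPolynomial (Fin 2) R) (MvPolynomial (Fin 2) R) :=
  b • pderiv 0 - a • pderiv 1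

lemma perpDerivation_C_mul_linForm_pow (a b c p q : R) (n : ℕ) :
    perpDerivation a b (C c * linForm p q ^ n) =
      C (c * n * (b * p - a * q)) * linForm p q ^ (n - 1) := by
  have hL : perpDerivation a b (linForm p q) = C (b * p - a * q) := by
    simp [perpDerivation, linForm, smul_eq_C_mul]
  rw [C_mul', Derivation.map_smul, Derivation.leibniz_pow, hL]
  simp only [smul_eq_C_mul, nsmul_eq_mul, smul_eq_mul, map_mul, map_natCast]
  ring

end BinaryForm

open Complex ComplexConjugate

lemma eq_zero_of_C_mul_pow_add_C_mul_pow_eq_zero {n : ℕ} (hn : 0 < n) {α β : ℂ}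
    (h : C α * linForm 1 I ^ n + C β * linForm 1 (-I) ^ n = 0) : α = 0 ∧ β = 0 := by
  obtain ⟨m, rfl⟩ := Nat.exists_eq_add_one_of_ne_zero hn.ne'
  have h0 := congrArg (coeff (expXY (m + 1) 0)) h
  have h1 := congrArg (coeff (expXY m 1)) h
  simp only [coeff_add, coeff_C_mul, coeff_zero, coeff_linForm_pow, one_pow, pow_zero, pow_one,
    mul_one, one_mul, add_zero, Nat.choose_self, Nat.choose_succ_self_right, Nat.cast_one,
    Nat.cast_add, mul_neg, neg_mul] at h0 h1
  have hm : I * ((m : ℂ) + 1) ≠ 0 := mul_ne_zero I_ne_zero (by exact_mod_cast m.succ_ne_zero)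
  have hαβ : α - β = 0 := (mul_eq_zero.mp (by linear_combination h1)).resolve_right hm
  exact ⟨by linear_combination (h0 + hαβ) / 2, by linear_combination (h0 - hαβ) / 2⟩

lemma eq_zero_of_sum_C_mul_linForm_pow_eq {r n : ℕ} (hrn : r < n) (lam : Fin r → ℂ)
    (a b : Fin r → ℝ) {α β : ℂ}
    (h : ∑ i, C (lam i) * linForm (a i : ℂ) (b i) ^ n =
      C α * linForm 1 I ^ n + C β * linForm 1 (-I) ^ n) :
    α = 0 ∧ β = 0 := by
  induction r generalizing n α β with
  | zero =>
    rw [Fin.sum_univ_zero] at h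
    exact eq_zero_of_C_mul_pow_add_C_mul_pow_eq_zero (by omega) h.symm
  | succ r ih =>
    rw [Fin.sum_univ_castSucc] at h
    set a' := a (Fin.last r)
    set b' := b (Fin.last r)
    by_cases h0 : a' = 0 ∧ b' = 0
    · have hL : linForm (a' : ℂ) b' ^ n = 0 := by
        simp [h0, linForm, zero_pow (by omega : n ≠ 0)]
      rw [hL, mul_zero, add_zero] at h
      exact ih (by omega) _ _ _ h
    · have h' := congrArg (perpDerivation (a' : ℂ) b') h
      simp only [map_add, map_sum, perpDerivation_C_mul_linForm_pow] at h'
      have hlast : (b' : ℂ) * a' - a' * b' = 0 := by ring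
      rw [hlast, mul_zero, map_zero, zero_mul, add_zero] at h'
      obtain ⟨hα, hβ⟩ := ih (by omega) _ (a ∘ Fin.castSucc) (b ∘ Fin.castSucc) h'
      have hn : (n : ℂ) ≠ 0 := by exact_mod_cast (by omega : n ≠ 0)
      have hI : (b' : ℂ) - a' * I ≠ 0 := fun h =>
        h0 ⟨by simpa using congrArg Complex.im h, by simpa using congrArg Complex.re h⟩
      have hI' : (b' : ℂ) + a' * I ≠ 0 := fun h =>
        h0 ⟨by simpa using congrArg Complex.im h, by simpa using congrArg Complex.re h⟩
      exact ⟨by simpa [hn, hI] using hα, by simpa [hn, hI'] using hβ⟩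

lemma laplacian_map (f : MvPolynomial (Fin 2) ℝ) :
    laplacian ℂ (map (algebraMap ℝ ℂ) f) = map (algebraMap ℝ ℂ) (lap f) := by
  simp [laplacian_apply, lap, pderiv_map]

lemma exists_map_eq_of_lap_eq_zero {d : ℕ} (hd : 0 < d) {f : MvPolynomial (Fin 2) ℝ}
    (hf : f.IsHomogeneous d) (hΔ : lap f = 0) :
    ∃ A : ℂ, map (algebraMap ℝ ℂ) f =
      C A * linForm 1 I ^ d + C (conj A) * linForm 1 (-I) ^ d := by
  obtain ⟨n, rfl⟩ := Nat.exists_eq_add_one_of_ne_zero hd.ne'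
  -- `A z ^ d + conj A w ^ d` has coefficient `2 Re A` at `x ^ d` and `-2 d Im A` at `x ^ (d - 1) y`
  refine ⟨(coeff (expXY (n + 1) 0) f - I * coeff (expXY n 1) f / (n + 1)) / 2, ?_⟩
  rw [← sub_eq_zero]
  apply eq_zero_of_laplacian_eq_zero
  · exact (hf.map _).sub (((isHomogeneous_linForm_pow _ _ _).C_mul _).add
      ((isHomogeneous_linForm_pow _ _ _).C_mul _))
  · have hz : (1 : ℂ) ^ 2 + I ^ 2 = 0 := by simp
    have hw : (1 : ℂ) ^ 2 + (-I) ^ 2 = 0 := by simp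
    simp [C_mul', laplacian_map, hΔ, laplacian_linForm_pow hz, laplacian_linForm_pow hw]
  · have hx (s : ℂ) : coeff (expXY (n + 1) 0) (linForm 1 s ^ (n + 1)) = 1 := by
      simpa using coeff_linForm_pow 1 s (n + 1) 0
    simp only [coeff_sub, coeff_add, coeff_C_mul, coeff_map, coe_algebraMap, hx, map_div₀,
      map_sub, map_mul, conj_ofReal, conj_I, map_ofNat, map_natCast, map_add, map_one]
    ring
  · simp only [coeff_sub, coeff_add, coeff_C_mul, coeff_map, coe_algebraMap, coeff_linForm_pow,
      map_div₀, map_sub, map_mul, conj_ofReal, conj_I, map_ofNat, map_natCast, map_add, map_one,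
      one_pow, pow_one, one_mul, Nat.choose_succ_self_right, Nat.cast_add, Nat.cast_one]
    have hn : (n : ℂ) + 1 ≠ 0 := by exact_mod_cast n.succ_ne_zero
    field_simp
    linear_combination (2 * ((coeff (expXY n 1) f : ℝ) : ℂ)) * I_sq

noncomputable def rootOfNegOne (d : ℕ) : ℂ := exp ((Real.pi / d : ℝ) * I)

lemma rootOfNegOne_pow (d m : ℕ) : rootOfNegOne d ^ m = exp ((m * (Real.pi / d) : ℝ) * I) := by
  rw [rootOfNegOne, ← exp_nat_mul]; push_cast; ring_nf

lemma rootOfNegOne_pow_self {d : ℕ} (hd : d ≠ 0) : rootOfNegOne d ^ d = -1 := by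
  rw [rootOfNegOne_pow, mul_div_cancel₀ _ (by exact_mod_cast hd), exp_pi_mul_I]

lemma rootOfNegOne_mul_conj (d : ℕ) : rootOfNegOne d * conj (rootOfNegOne d) = 1 := by
  rw [mul_conj, normSq_eq_norm_sq, rootOfNegOne, norm_exp_ofReal_mul_I]; simp

lemma isPrimitiveRoot_rootOfNegOne_sq {d : ℕ} (hd : d ≠ 0) :
    IsPrimitiveRoot (rootOfNegOne d ^ 2) d := by
  convert isPrimitiveRoot_exp d hd using 1
  rw [rootOfNegOne_pow]; push_cast; ring_nf

lemma im_rootOfNegOne_pow_pos {d m : ℕ} (hm : 0 < m) (hmd : m < d) :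
    0 < (rootOfNegOne d ^ m).im := by
  rw [rootOfNegOne_pow, exp_ofReal_mul_I_im]
  have hd : (0 : ℝ) < d := by exact_mod_cast hm.trans hmd
  apply Real.sin_pos_of_pos_of_lt_pi
  · have : (0 : ℝ) < m := by exact_mod_cast hm
    positivity
  · rw [← mul_div_assoc, div_lt_iff₀ hd, mul_comm]
    exact mul_lt_mul_of_pos_left (by exact_mod_cast hmd : (m : ℝ) < d) Real.pi_pos

lemma im_mul_conj_rootOfNegOne_pos {d i j : ℕ} (hij : i < j) (hjd : j < d) {u : ℂ}
    (hu : u ≠ 0) :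
    0 < (u * conj (rootOfNegOne d) ^ i * conj (u * conj (rootOfNegOne d) ^ j)).im := by
  have h : u * conj (rootOfNegOne d) ^ i * conj (u * conj (rootOfNegOne d) ^ j) =
      (normSq u : ℂ) * rootOfNegOne d ^ (j - i) := by
    obtain ⟨m, rfl⟩ := Nat.exists_eq_add_of_lt hij
    simp only [map_mul, map_pow, conj_conj, ← mul_conj]
    have e := congrArg (· ^ i) (rootOfNegOne_mul_conj d)
    simp only [one_pow, mul_pow] at e
    rw [show i + m + 1 - i = m + 1 by omega, add_assoc, pow_add]
    linear_combination (u * conj u * rootOfNegOne d ^ (m + 1)) * e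
  rw [h, im_ofReal_mul]
  exact mul_pos (normSq_pos.mpr hu) (im_rootOfNegOne_pow_pos (by omega) (by omega))

lemma linForm_re_im (v : ℂ) :
    linForm ((2 * v.re : ℝ) : ℂ) ((-2 * v.im : ℝ) : ℂ) =
      C v * linForm 1 I + C (conj v) * linForm 1 (-I) := by
  have h1 : ((2 * v.re : ℝ) : ℂ) = v + conj v := (add_conj v).symm
  have h2 : ((-2 * v.im : ℝ) : ℂ) = I * (v - conj v) := by
    rw [sub_conj]; push_cast; linear_combination (-2 * (v.im : ℂ)) * I_sq
  rw [h1, h2]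
  simp only [linForm, map_add, map_mul, map_sub, map_one, map_neg]
  ring

lemma sum_neg_one_pow_div_mul_pow_eq {d : ℕ} (hd : d ≠ 0) (u : ℂ) :
    ∑ k ∈ range d, C ((-1) ^ k / d : ℂ) *
        (C (u * conj (rootOfNegOne d) ^ k) * linForm 1 I +
          C (conj (u * conj (rootOfNegOne d) ^ k)) * linForm 1 (-I)) ^ d =
      C (u ^ d) * linForm 1 I ^ d + C (conj u ^ d) * linForm 1 (-I) ^ d := by
  set ω := rootOfNegOne d
  set P := C u * linForm 1 I
  set Q := C (conj u) * linForm 1 (-I)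
  have hζ : IsPrimitiveRoot (C (ω ^ 2) : MvPolynomial (Fin 2) ℂ) d :=
    (isPrimitiveRoot_rootOfNegOne_sq hd).map_of_injective (C_injective _ _)
  have hterm (k : ℕ) : C ((-1) ^ k / d : ℂ) *
      (C (u * conj ω ^ k) * linForm 1 I + C (conj (u * conj ω ^ k)) * linForm 1 (-I)) ^ d =
      C (1 / d : ℂ) * (P + C (ω ^ 2) ^ k * Q) ^ d := by
    have hω : (ω ^ k) ^ d = (-1) ^ k := by
      rw [← pow_mul, mul_comm, pow_mul, rootOfNegOne_pow_self hd]
    have hM : C (ω ^ k) * (C (u * conj ω ^ k) * linForm 1 I + C (conj (u * conj ω ^ k)) *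
        linForm 1 (-I)) = P + C (ω ^ 2) ^ k * Q := by
      have e : (C ω * C (conj ω)) ^ k = (1 : MvPolynomial (Fin 2) ℂ) := by
        rw [← map_mul, rootOfNegOne_mul_conj, map_one, one_pow]
      simp only [P, Q, map_mul, map_pow, conj_conj]
      linear_combination (C u * linForm 1 I) * e
    rw [← hM, mul_pow, ← map_pow C (ω ^ k) d, hω, div_eq_mul_one_div, map_mul]
    ring
  rw [sum_congr rfl fun k _ => hterm k, ← mul_sum, hζ.sum_add_pow_mul_pow, ← mul_assoc,
    ← map_natCast C, ← map_mul, one_div_mul_cancel (by exact_mod_cast hd), map_one, one_mul]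
  simp only [P, Q, mul_pow, map_pow]

lemma map_sum_smul_pow {r d : ℕ} (lam a b : Fin r → ℝ) :
    map (algebraMap ℝ ℂ) (∑ i, lam i • (C (a i) * X 0 + C (b i) * X 1) ^ d) =
      ∑ i, C (lam i : ℂ) * linForm (a i : ℂ) (b i) ^ d := by
  simp [smul_eq_C_mul, linForm]

lemma not_isWaringDecomp_of_lt {d r : ℕ} (hr : r < d) {f : MvPolynomial (Fin 2) ℝ} {A B : ℂ}
    (hA : A ≠ 0)
    (hf : map (algebraMap ℝ ℂ) f = C A * linForm 1 I ^ d + C B * linForm 1 (-I) ^ d) :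
    ¬ IsWaringDecomp d r f := by
  rintro ⟨lam, a, b, rfl⟩
  rw [map_sum_smul_pow] at hf
  exact hA (eq_zero_of_sum_C_mul_linForm_pow_eq hr _ a b hf).1

lemma exists_isWaringDecomp_of_ne_zero {d : ℕ} (hd : d ≠ 0) {f : MvPolynomial (Fin 2) ℝ}
    {A : ℂ} (hA : A ≠ 0)
    (hf : map (algebraMap ℝ ℂ) f = C A * linForm 1 I ^ d + C (conj A) * linForm 1 (-I) ^ d) :
    ∃ lam a b : Fin d → ℝ, (∀ i j, i ≠ j → a i * b j - a j * b i ≠ 0) ∧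
      f = ∑ i, lam i • (C (a i) * X 0 + C (b i) * X 1) ^ d := by
  obtain ⟨u, rfl⟩ := IsAlgClosed.exists_pow_nat_eq A (Nat.pos_of_ne_zero hd)
  have hu : u ≠ 0 := by rintro rfl; exact hA (zero_pow hd)
  set v : ℕ → ℂ := fun k => u * conj (rootOfNegOne d) ^ k
  refine ⟨fun k => (-1) ^ (k : ℕ) / d, fun k => 2 * (v k).re, fun k => -2 * (v k).im, ?_, ?_⟩
  · intro i j hij h0
    have key (i j : Fin d) : 2 * (v i).re * (-2 * (v j).im) - 2 * (v j).re * (-2 * (v i).im) =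
        4 * (v i * conj (v j)).im := by
      simp only [mul_im, conj_re, conj_im]; ring
    rcases Fin.lt_or_lt_of_ne hij with h | h
    · have hpos : 0 < (v i * conj (v j)).im := im_mul_conj_rootOfNegOne_pos h j.isLt hu
      linarith [key i j]
    · have hpos : 0 < (v j * conj (v i)).im := im_mul_conj_rootOfNegOne_pos h i.isLt hu
      linarith [key j i]
  · apply map_injective _ (algebraMap ℝ ℂ).injective
    rw [map_sum_smul_pow, hf, map_pow (starRingEnd ℂ) u d,
      ← sum_neg_one_pow_div_mul_pow_eq hd u, ← Fin.sum_univ_eq_sum_range]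
    refine sum_congr rfl fun k _ => ?_
    rw [linForm_re_im]
    push_cast
    rfl

lemma waringRank_eq {d : ℕ} (hd : 0 < d) {f : MvPolynomial (Fin 2) ℝ}
    (hf : IsWaringDecomp d d f) (hlt : ¬ ∃ r : ℕ, r < d ∧ IsWaringDecomp d r f) :
    waringRank d f = d :=
  le_antisymm (Nat.sInf_le ⟨hd, hf⟩)
    (le_csInf ⟨d, hd, hf⟩ fun r hr => not_lt.mp fun h => hlt ⟨r, h, hr.2⟩)

/-- the Waring rank of a nonzero harmonic binary `d`-form equals `d`:
there is a decomposition into `d` pairwise non-proportional `d`-th powers, and no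
decomposition with fewer than `d` summands exists. -/
theorem harmonic_waring_rank_eq_degree
    (d : ℕ) (hd : 0 < d) (f : MvPolynomial (Fin 2) ℝ)
    (hf : f.IsHomogeneous d) (hf0 : f ≠ 0) (hharm : lap f = 0) :
    (∃ lam a b : Fin d → ℝ,
      (∀ i j, i ≠ j → a i * b j - a j * b i ≠ 0) ∧
      f = ∑ i, lam i • (C (a i) * X 0 + C (b i) * X 1) ^ d) ∧
    (¬ ∃ r : ℕ, r < d ∧ IsWaringDecomp d r f) ∧
    waringRank d f = d := by
  obtain ⟨A, hA⟩ := exists_map_eq_of_lap_eq_zero hd hf hharm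
  have hA0 : A ≠ 0 := by
    rintro rfl
    exact hf0 (map_injective _ (algebraMap ℝ ℂ).injective (by simpa using hA))
  have hlow : ¬ ∃ r : ℕ, r < d ∧ IsWaringDecomp d r f :=
    fun ⟨_, hr, hdec⟩ => not_isWaringDecomp_of_lt hr hA0 hA hdec
  obtain ⟨lam, a, b, hprop, hdec⟩ := exists_isWaringDecomp_of_ne_zero hd.ne' hA0 hA
  exact ⟨⟨lam, a, b, hprop, hdec⟩, hlow, waringRank_eq hd ⟨lam, a, b, hdec⟩ hlow⟩
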